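/- arXiv:math/0604444 — 4 statements merged into one kernel-verified Lean document; each statement's English description precedes it below -/
import Mathlib

section
/- Let α ∈ (0,1), M > 0, and let ν be a finite positive Borel measure on ℂ such that ν(D(z,r)) ≤ M r^{1+α} for every z ∈ ℂ and every r > 0. Then for every z ∈ ℂ the integral h(z) = ∫_ℂ 1/(π(z−w)) dν(w) converges absolutely, and there is a constant C = C(α, M) > 0 such that |h(z)−h(w)| ≤ C|z−w|^α for all z, w ∈ ℂ. In particular h ∈ Lip_α(ℂ). -/
/-!
Split `h z - h w` at the disc `D = D(z, 2|z - w|)`. On `D` each of the two integrals is bounded by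
`∫_{D(x,ρ)} |x - u|⁻¹ dν ≲ ρ^α` with `ρ ≤ 3|z - w|`, and off `D` the two kernels differ by at most
`2|z - w| / |z - u|²`, whose integral over the complement of `D(z, ρ)` is `≲ ρ^(α-1)`. Both radial
estimates come from summing the growth bound `ν(D(x, ρ)) ≤ M ρ^(1+α)` over dyadic annuli: the
resulting geometric series converge because `1 < 1 + α < 2`.
-/

open MeasureTheory Metric
open scoped ENNReal

theorem setLIntegral_le_tsum_mul_measure {Ω : Type*} [MeasurableSpace Ω] {μ : Measure Ω}
    {S : Set Ω} {f : Ω → ℝ≥0∞} {B : ℕ → Set Ω} {c : ℕ → ℝ≥0∞} (hS : MeasurableSet S)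
    (hB : ∀ k, MeasurableSet (B k)) (hf : ∀ y ∈ S, ∃ k, y ∈ B k ∧ f y ≤ c k) :
    ∫⁻ y in S, f y ∂μ ≤ ∑' k, c k * μ (B k) :=
  calc ∫⁻ y in S, f y ∂μ ≤ ∫⁻ y in S, ∑' k, (B k).indicator (fun _ ↦ c k) y ∂μ := by
        refine setLIntegral_mono' hS fun y hy ↦ ?_
        obtain ⟨k, hyk, hfy⟩ := hf y hy
        exact hfy.trans <| (Set.indicator_of_mem hyk (fun _ ↦ c k)).symm.le.trans
          (ENNReal.le_tsum (f := fun j ↦ (B j).indicator (fun _ ↦ c j) y) k)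
    _ ≤ ∫⁻ y, ∑' k, (B k).indicator (fun _ ↦ c k) y ∂μ := setLIntegral_le_lintegral _ _
    _ = ∑' k, c k * μ (B k) := by
        rw [lintegral_tsum fun k ↦ (measurable_const.indicator (hB k)).aemeasurable]
        simp only [lintegral_indicator_const (hB _)]

theorem ENNReal.tsum_ofReal_mul_pow {c q : ℝ} (hc : 0 ≤ c) (hq₀ : 0 ≤ q) (hq₁ : q < 1) :
    ∑' k : ℕ, ENNReal.ofReal (c * q ^ k) = ENNReal.ofReal (c / (1 - q)) := by
  rw [← ENNReal.ofReal_tsum_of_nonneg (fun k ↦ by positivity)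
    ((summable_geometric_of_lt_one hq₀ hq₁).mul_left c), tsum_mul_left,
    tsum_geometric_of_lt_one hq₀ hq₁, div_eq_mul_inv]

theorem exists_mul_two_pow_le_lt {r d : ℝ} (hr : 0 < r) (hrd : r ≤ d) :
    ∃ k : ℕ, r * 2 ^ k ≤ d ∧ d < r * 2 ^ (k + 1) := by
  obtain ⟨k, hk₁, hk₂⟩ := exists_nat_pow_near ((one_le_div hr).2 hrd) one_lt_two
  exact ⟨k, by rwa [le_div_iff₀' hr] at hk₁, by rwa [div_lt_iff₀' hr] at hk₂⟩

theorem exists_mul_two_inv_pow_le_lt {r d : ℝ} (hd : 0 < d) (hdr : d < r) :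
    ∃ k : ℕ, r * 2⁻¹ ^ (k + 1) ≤ d ∧ d < r * 2⁻¹ ^ k := by
  obtain ⟨n, hn₁, hn₂⟩ := exists_mem_Ioc_zpow (div_pos (hd.trans hdr) hd) one_lt_two
  have hn : 0 ≤ n := by
    by_contra! hn
    have := zpow_le_one_of_nonpos₀ (one_le_two : (1 : ℝ) ≤ 2) (show n + 1 ≤ 0 by omega)
    linarith [(one_lt_div hd).2 hdr]
  lift n to ℕ using hn
  refine ⟨n, ?_, ?_⟩
  · rw [inv_pow, ← div_eq_mul_inv, div_le_iff₀ (by positivity), ← div_le_iff₀' hd]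
    exact_mod_cast hn₂
  · rw [inv_pow, ← div_eq_mul_inv, lt_div_iff₀ (by positivity), ← lt_div_iff₀' hd]
    exact_mod_cast hn₁

theorem Real.mul_pow_rpow {r a : ℝ} (hr : 0 ≤ r) (ha : 0 ≤ a) (t : ℝ) (k : ℕ) :
    (r * a ^ k) ^ t = r ^ t * (a ^ t) ^ k := by
  rw [Real.mul_rpow hr (by positivity), Real.rpow_pow_comm ha]

section GrowthMeasure

variable {X : Type*} [PseudoMetricSpace X] [MeasurableSpace X] [OpensMeasurableSpace X]
  {μ : Measure X} {M s p r : ℝ}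

theorem setLIntegral_ball_dist_rpow_neg_le
    (hμ : ∀ x r, 0 < r → μ (ball x r) ≤ ENNReal.ofReal (M * r ^ s)) (hM : 0 ≤ M) (hp : 0 < p)
    (hps : p < s) (x : X) (hr : 0 < r) :
    ∫⁻ y in ball x r, ENNReal.ofReal (dist x y ^ (-p)) ∂μ ≤
      ENNReal.ofReal (2 ^ p * M / (1 - 2 ^ (p - s)) * r ^ (s - p)) := by
  set ρ : ℕ → ℝ := fun k ↦ r * 2⁻¹ ^ k
  have hρ (k : ℕ) : 0 < ρ k := by positivity
  have hq₀ : 0 ≤ (2 : ℝ) ^ (p - s) := by positivity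
  have hq₁ : (2 : ℝ) ^ (p - s) < 1 := Real.rpow_lt_one_of_one_lt_of_neg one_lt_two (by linarith)
  calc ∫⁻ y in ball x r, ENNReal.ofReal (dist x y ^ (-p)) ∂μ
      ≤ ∑' k, ENNReal.ofReal (ρ (k + 1) ^ (-p)) * μ (ball x (ρ k)) := by
        refine setLIntegral_le_tsum_mul_measure measurableSet_ball (fun _ ↦ measurableSet_ball)
          fun y hy ↦ ?_
        rcases (dist_nonneg (x := x) (y := y)).eq_or_lt with hxy | hxy
        -- points at distance `0` from `x` contribute nothing, since `0 ^ (-p) = 0` by convention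
        · exact ⟨0, by simpa [ρ] using hy, by simp [← hxy, Real.zero_rpow (neg_ne_zero.2 hp.ne')]⟩
        obtain ⟨k, hk₁, hk₂⟩ := exists_mul_two_inv_pow_le_lt hxy (mem_ball'.1 hy)
        exact ⟨k, mem_ball'.2 hk₂, ENNReal.ofReal_le_ofReal <|
          Real.rpow_le_rpow_of_nonpos (hρ _) hk₁ (by linarith)⟩
    _ ≤ ∑' k : ℕ, ENNReal.ofReal (2 ^ p * M * r ^ (s - p) * (2 ^ (p - s)) ^ k) := by
        refine ENNReal.tsum_le_tsum fun k ↦ ?_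
        grw [hμ x _ (hρ k), ← ENNReal.ofReal_mul (by positivity)]
        refine le_of_eq (congrArg _ ?_)
        have hρk : ρ (k + 1) = ρ k * 2⁻¹ := by simp only [ρ]; ring
        have hρs : ρ k ^ (-p) * ρ k ^ s = r ^ (s - p) * (2 ^ (p - s)) ^ k := by
          rw [← Real.rpow_add (hρ k), neg_add_eq_sub, Real.mul_pow_rpow hr.le (by norm_num),
            Real.inv_rpow zero_le_two, ← Real.rpow_neg zero_le_two, neg_sub]
        rw [hρk, Real.mul_rpow (hρ k).le (by norm_num), Real.inv_rpow zero_le_two,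
          Real.rpow_neg zero_le_two, inv_inv]
        linear_combination (2 ^ p * M) * hρs
    _ = ENNReal.ofReal (2 ^ p * M / (1 - 2 ^ (p - s)) * r ^ (s - p)) := by
        rw [ENNReal.tsum_ofReal_mul_pow (by positivity) hq₀ hq₁]
        ring_nf

theorem setLIntegral_compl_ball_dist_rpow_neg_le
    (hμ : ∀ x r, 0 < r → μ (ball x r) ≤ ENNReal.ofReal (M * r ^ s)) (hM : 0 ≤ M) (hp : 0 ≤ p)
    (hsp : s < p) (x : X) (hr : 0 < r) :
    ∫⁻ y in (ball x r)ᶜ, ENNReal.ofReal (dist x y ^ (-p)) ∂μ ≤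
      ENNReal.ofReal (2 ^ s * M / (1 - 2 ^ (s - p)) * r ^ (s - p)) := by
  set ρ : ℕ → ℝ := fun k ↦ r * 2 ^ k
  have hρ (k : ℕ) : 0 < ρ k := by positivity
  have hq₀ : 0 ≤ (2 : ℝ) ^ (s - p) := by positivity
  have hq₁ : (2 : ℝ) ^ (s - p) < 1 := Real.rpow_lt_one_of_one_lt_of_neg one_lt_two (by linarith)
  calc ∫⁻ y in (ball x r)ᶜ, ENNReal.ofReal (dist x y ^ (-p)) ∂μ
      ≤ ∑' k, ENNReal.ofReal (ρ k ^ (-p)) * μ (ball x (ρ (k + 1))) := by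
        refine setLIntegral_le_tsum_mul_measure measurableSet_ball.compl
          (fun _ ↦ measurableSet_ball) fun y hy ↦ ?_
        obtain ⟨k, hk₁, hk₂⟩ := exists_mul_two_pow_le_lt hr (not_lt.1 (mt mem_ball'.2 hy))
        exact ⟨k, mem_ball'.2 hk₂, ENNReal.ofReal_le_ofReal <|
          Real.rpow_le_rpow_of_nonpos (hρ _) hk₁ (by linarith)⟩
    _ ≤ ∑' k : ℕ, ENNReal.ofReal (2 ^ s * M * r ^ (s - p) * (2 ^ (s - p)) ^ k) := by
        refine ENNReal.tsum_le_tsum fun k ↦ ?_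
        grw [hμ x _ (hρ (k + 1)), ← ENNReal.ofReal_mul (by positivity)]
        refine le_of_eq (congrArg _ ?_)
        have hρk : ρ (k + 1) = ρ k * 2 := by simp only [ρ]; ring
        have hρs : ρ k ^ (-p) * ρ k ^ s = r ^ (s - p) * (2 ^ (s - p)) ^ k := by
          rw [← Real.rpow_add (hρ k), neg_add_eq_sub, Real.mul_pow_rpow hr.le zero_le_two]
        rw [hρk, Real.mul_rpow (hρ k).le zero_le_two]
        linear_combination (2 ^ s * M) * hρs
    _ = ENNReal.ofReal (2 ^ s * M / (1 - 2 ^ (s - p)) * r ^ (s - p)) := by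
        rw [ENNReal.tsum_ofReal_mul_pow (by positivity) hq₀ hq₁]
        ring_nf

theorem integrable_dist_rpow_neg [IsFiniteMeasure μ]
    (hμ : ∀ x r, 0 < r → μ (ball x r) ≤ ENNReal.ofReal (M * r ^ s)) (hM : 0 ≤ M) (hp : 0 < p)
    (hps : p < s) (x : X) :
    Integrable (fun y ↦ dist x y ^ (-p)) μ := by
  refine ⟨(by fun_prop : Measurable fun y ↦ dist x y ^ (-p)).aestronglyMeasurable, ?_⟩
  rw [hasFiniteIntegral_iff_ofReal (ae_of_all _ fun y ↦ by positivity),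
    ← lintegral_add_compl _ (measurableSet_ball (x := x) (ε := 1))]
  refine ENNReal.add_lt_top.2
    ⟨(setLIntegral_ball_dist_rpow_neg_le hμ hM hp hps x one_pos).trans_lt ENNReal.ofReal_lt_top, ?_⟩
  calc ∫⁻ y in (ball x 1)ᶜ, ENNReal.ofReal (dist x y ^ (-p)) ∂μ
      ≤ ∫⁻ _ in (ball x 1)ᶜ, 1 ∂μ := by
        refine setLIntegral_mono' measurableSet_ball.compl fun y hy ↦ ?_
        exact ENNReal.ofReal_le_one.2 <|
          Real.rpow_le_one_of_one_le_of_nonpos (not_lt.1 (mt mem_ball'.2 hy)) (by linarith)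
    _ < ⊤ := by simp [measure_lt_top]

end GrowthMeasure

theorem norm_inv_sub_inv_le {𝕜 : Type*} [NormedField 𝕜] {z w u : 𝕜}
    (h : 2 * ‖z - w‖ ≤ ‖z - u‖) :
    ‖(z - u)⁻¹ - (w - u)⁻¹‖ ≤ 2 * ‖z - w‖ / ‖z - u‖ ^ 2 := by
  rcases eq_or_ne z w with rfl | hzw
  · simp
  have hzu : 0 < ‖z - u‖ := lt_of_lt_of_le (by simpa [sub_eq_zero] using hzw) h
  have hwu : ‖z - u‖ / 2 ≤ ‖w - u‖ := by
    linarith [norm_sub_le_norm_sub_add_norm_sub z w u]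
  rw [inv_sub_inv (norm_pos_iff.1 hzu) (norm_pos_iff.1 (by linarith)), sub_sub_sub_cancel_right,
    norm_div, norm_mul, norm_sub_rev w z]
  calc ‖z - w‖ / (‖z - u‖ * ‖w - u‖) ≤ ‖z - w‖ / (‖z - u‖ * (‖z - u‖ / 2)) := by gcongr
    _ = 2 * ‖z - w‖ / ‖z - u‖ ^ 2 := by field_simp

theorem norm_inv_sub_eq_dist_rpow {𝕜 : Type*} [NormedField 𝕜] (z u : 𝕜) :
    ‖(z - u)⁻¹‖ = dist z u ^ (-1 : ℝ) := by
  rw [norm_inv, dist_eq_norm, Real.rpow_neg_one]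

section InverseKernel

variable {𝕜 : Type*} [RCLike 𝕜] [MeasurableSpace 𝕜] {μ : Measure 𝕜}

theorem integrable_inv_sub [BorelSpace 𝕜] [IsFiniteMeasure μ] {M s : ℝ}
    (hμ : ∀ x r, 0 < r → μ (ball x r) ≤ ENNReal.ofReal (M * r ^ s)) (hM : 0 ≤ M) (hs : 1 < s)
    (z : 𝕜) : Integrable (fun u ↦ (z - u)⁻¹) μ :=
  (integrable_dist_rpow_neg hμ hM one_pos hs z).mono'
    (by fun_prop : Measurable _).aestronglyMeasurable
    (ae_of_all _ fun u ↦ (norm_inv_sub_eq_dist_rpow z u).le)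

theorem norm_setIntegral_inv_sub_le {C α r : ℝ} (hC : 0 ≤ C)
    (hnear : ∀ (x : 𝕜) r, 0 < r →
      ∫⁻ u in ball x r, ENNReal.ofReal (dist x u ^ (-1 : ℝ)) ∂μ ≤ ENNReal.ofReal (C * r ^ α))
    {x : 𝕜} {S : Set 𝕜} (hr : 0 < r) (hS : S ⊆ ball x r) :
    ‖∫ u in S, (x - u)⁻¹ ∂μ‖ ≤ C * r ^ α := by
  refine (norm_integral_le_lintegral_norm _).trans <|
    ENNReal.toReal_le_of_le_ofReal (by positivity) ?_
  simp_rw [norm_inv_sub_eq_dist_rpow]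
  exact (lintegral_mono_set hS).trans (hnear x r hr)

theorem norm_setIntegral_inv_sub_sub_inv_sub_le [OpensMeasurableSpace 𝕜] {C α : ℝ} (hC : 0 ≤ C)
    (hfar : ∀ (x : 𝕜) r, 0 < r →
      ∫⁻ u in (ball x r)ᶜ, ENNReal.ofReal (dist x u ^ (-2 : ℝ)) ∂μ ≤ ENNReal.ofReal (C * r ^ α))
    {z w : 𝕜} (hzw : z ≠ w) :
    ‖∫ u in (ball z (2 * ‖z - w‖))ᶜ, ((z - u)⁻¹ - (w - u)⁻¹) ∂μ‖ ≤
      2 * ‖z - w‖ * (C * (2 * ‖z - w‖) ^ α) := by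
  have hδ : 0 < ‖z - w‖ := norm_pos_iff.2 (sub_ne_zero.2 hzw)
  refine (norm_integral_le_lintegral_norm _).trans <|
    ENNReal.toReal_le_of_le_ofReal (by positivity) ?_
  calc ∫⁻ u in (ball z (2 * ‖z - w‖))ᶜ, ENNReal.ofReal ‖(z - u)⁻¹ - (w - u)⁻¹‖ ∂μ
      ≤ ∫⁻ u in (ball z (2 * ‖z - w‖))ᶜ,
          ENNReal.ofReal (2 * ‖z - w‖) * ENNReal.ofReal (dist z u ^ (-2 : ℝ)) ∂μ := by
        refine setLIntegral_mono' measurableSet_ball.compl fun u hu ↦ ?_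
        rw [← ENNReal.ofReal_mul (by positivity), Real.rpow_neg dist_nonneg, dist_eq_norm,
          Real.rpow_two, ← div_eq_mul_inv]
        exact ENNReal.ofReal_le_ofReal <| norm_inv_sub_inv_le <| by
          simpa [dist_eq_norm] using mt mem_ball'.2 hu
    _ = ENNReal.ofReal (2 * ‖z - w‖) *
          ∫⁻ u in (ball z (2 * ‖z - w‖))ᶜ, ENNReal.ofReal (dist z u ^ (-2 : ℝ)) ∂μ :=
        lintegral_const_mul' _ _ ENNReal.ofReal_ne_top
    _ ≤ ENNReal.ofReal (2 * ‖z - w‖ * (C * (2 * ‖z - w‖) ^ α)) := by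
        grw [hfar z _ (by positivity), ← ENNReal.ofReal_mul (by positivity)]

theorem norm_integral_inv_sub_sub_integral_inv_sub_le [OpensMeasurableSpace 𝕜] {C₁ C₂ α : ℝ}
    (hC₁ : 0 ≤ C₁) (hC₂ : 0 ≤ C₂) (hint : ∀ z : 𝕜, Integrable (fun u ↦ (z - u)⁻¹) μ)
    (hnear : ∀ (x : 𝕜) r, 0 < r →
      ∫⁻ u in ball x r, ENNReal.ofReal (dist x u ^ (-1 : ℝ)) ∂μ ≤ ENNReal.ofReal (C₁ * r ^ α))
    (hfar : ∀ (x : 𝕜) r, 0 < r →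
      ∫⁻ u in (ball x r)ᶜ, ENNReal.ofReal (dist x u ^ (-2 : ℝ)) ∂μ ≤
        ENNReal.ofReal (C₂ * r ^ (α - 1)))
    (z w : 𝕜) :
    ‖∫ u, (z - u)⁻¹ ∂μ - ∫ u, (w - u)⁻¹ ∂μ‖ ≤
      ((2 ^ α + 3 ^ α) * C₁ + 2 ^ α * C₂) * ‖z - w‖ ^ α := by
  rcases eq_or_ne z w with rfl | hzw
  · simp only [sub_self, norm_zero]
    positivity
  set δ := ‖z - w‖
  have hδ : 0 < δ := norm_pos_iff.2 (sub_ne_zero.2 hzw)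
  set B := ball z (2 * δ)
  have hsplit : ∫ u, (z - u)⁻¹ ∂μ - ∫ u, (w - u)⁻¹ ∂μ =
      (∫ u in B, (z - u)⁻¹ ∂μ - ∫ u in B, (w - u)⁻¹ ∂μ) +
        ∫ u in Bᶜ, ((z - u)⁻¹ - (w - u)⁻¹) ∂μ := by
    rw [← integral_add_compl measurableSet_ball (hint z),
      ← integral_add_compl measurableSet_ball (hint w),
      integral_sub (hint z).integrableOn (hint w).integrableOn]
    ring
  have hBw : B ⊆ ball w (3 * δ) := fun u hu ↦ by
    rw [mem_ball, dist_eq_norm] at hu ⊢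
    linarith [norm_sub_le_norm_sub_add_norm_sub u z w]
  have hnear_z := norm_setIntegral_inv_sub_le hC₁ hnear (by positivity) (subset_refl B)
  have hnear_w := norm_setIntegral_inv_sub_le hC₁ hnear (by positivity) hBw
  have hfar_zw := norm_setIntegral_inv_sub_sub_inv_sub_le hC₂ hfar hzw
  have h2δ : 2 * δ * (2 * δ) ^ (α - 1) = (2 * δ) ^ α := by
    rw [Real.rpow_sub_one (by positivity), mul_div_cancel₀ _ (by positivity)]
  calc ‖∫ u, (z - u)⁻¹ ∂μ - ∫ u, (w - u)⁻¹ ∂μ‖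
      ≤ C₁ * (2 * δ) ^ α + C₁ * (3 * δ) ^ α + 2 * δ * (C₂ * (2 * δ) ^ (α - 1)) := by
        rw [hsplit]
        exact (norm_add_le _ _).trans (add_le_add ((norm_sub_le _ _).trans
          (add_le_add hnear_z hnear_w)) hfar_zw)
    _ = ((2 ^ α + 3 ^ α) * C₁ + 2 ^ α * C₂) * δ ^ α := by
        rw [mul_left_comm, h2δ, Real.mul_rpow zero_le_two hδ.le,
          Real.mul_rpow zero_le_three hδ.le]
        ring

end InverseKernel

/-- If `ν` is a finite positive Borel measure on `ℂ` with growth `ν(D(z,r)) ≤ M r^{1+α}`,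
then its Cauchy transform `h(z) = ∫ 1/(π(z−w)) dν(w)` converges absolutely at every point
and is globally `α`-Hölder continuous with a constant depending only on `α` and `M`. -/
theorem cauchyTransform_holder (α M : ℝ) (hα : α ∈ Set.Ioo (0 : ℝ) 1) (hM : 0 < M)
    (ν : Measure ℂ) [IsFiniteMeasure ν]
    (hgrowth : ∀ (z : ℂ) (r : ℝ), 0 < r → ν (ball z r) ≤ ENNReal.ofReal (M * r ^ (1 + α))) :
    (∀ z : ℂ, Integrable (fun w : ℂ => (↑Real.pi * (z - w))⁻¹) ν) ∧
    ∃ C > 0, ∀ z w : ℂ,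
      ‖(∫ u, (↑Real.pi * (z - u))⁻¹ ∂ν) - (∫ u, (↑Real.pi * (w - u))⁻¹ ∂ν)‖ ≤
        C * ‖z - w‖ ^ α := by
  obtain ⟨hα₀, hα₁⟩ := hα
  have hint := integrable_inv_sub hgrowth hM.le (by linarith : 1 < 1 + α)
  set C₁ := 2 * M / (1 - 2 ^ (-α))
  set C₂ := 2 ^ (1 + α) * M / (1 - 2 ^ (α - 1))
  have hC₁ : 0 < C₁ := div_pos (by positivity)
    (sub_pos.2 (Real.rpow_lt_one_of_one_lt_of_neg one_lt_two (by linarith)))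
  have hC₂ : 0 < C₂ := div_pos (by positivity)
    (sub_pos.2 (Real.rpow_lt_one_of_one_lt_of_neg one_lt_two (by linarith)))
  have hnear (x : ℂ) (r : ℝ) (hr : 0 < r) :
      ∫⁻ u in ball x r, ENNReal.ofReal (dist x u ^ (-1 : ℝ)) ∂ν ≤ ENNReal.ofReal (C₁ * r ^ α) := by
    simpa using setLIntegral_ball_dist_rpow_neg_le hgrowth hM.le one_pos (by linarith) x hr
  have hfar (x : ℂ) (r : ℝ) (hr : 0 < r) :
      ∫⁻ u in (ball x r)ᶜ, ENNReal.ofReal (dist x u ^ (-2 : ℝ)) ∂ν ≤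
        ENNReal.ofReal (C₂ * r ^ (α - 1)) := by
    convert setLIntegral_compl_ball_dist_rpow_neg_le hgrowth hM.le zero_le_two (by linarith) x hr
      using 4 <;> ring_nf
  refine ⟨fun z ↦ by simpa only [mul_inv] using (hint z).const_mul (Real.pi : ℂ)⁻¹,
    Real.pi⁻¹ * ((2 ^ α + 3 ^ α) * C₁ + 2 ^ α * C₂), by positivity, fun z w ↦ ?_⟩
  simp_rw [mul_inv, integral_const_mul, ← mul_sub, norm_mul, norm_inv, Complex.norm_real,
    Real.norm_of_nonneg Real.pi_pos.le, mul_assoc]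
  gcongr
  exact norm_integral_inv_sub_sub_integral_inv_sub_le hC₁.le hC₂.le hint hnear hfar z w
end

section
/- Let α ∈ (0,1), M > 0, and let ν be a finite positive Borel measure on ℂ, not identically zero, such that ν(D(z,r)) ≤ M r^{1+α} for every z ∈ ℂ and every r > 0. Let h(z) = ∫_ℂ 1/(π(z−w)) dν(w) be its Cauchy transform. Then h is complex differentiable (holomorphic) at every point of ℂ \ supp ν, but h is not holomorphic on all of ℂ; that is, h is a function holomorphic outside supp ν with no entire extension. -/
/-!
Off the support of `ν` the Cauchy transform is holomorphic by differentiation under the integral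
sign. The growth bound with exponent `1 + α > 1` makes the potential `∫ dν(w) / |z - w|`
uniformly bounded (layer-cake formula), which justifies Fubini for contour integrals:
whenever `ν` does not charge the circle `|z| = R`,
`∮_{|z| = R} h(z) dz = ∫ (∮_{|z| = R} dz / (π (z - w))) dν(w) = 2i ν(D(0, R))`.
If `h` were entire, Cauchy's theorem would make this vanish for a radius with `ν(D(0, R)) > 0`.
-/

open MeasureTheory Metric
open scoped ENNReal

noncomputable section

/-- The (closed) support of a Borel measure on `ℂ`: points all of whose neighbourhoods
have positive measure. -/
def measureSupport (ν : MeasureTheory.Measure ℂ) : Set ℂ :=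
  {z : ℂ | ∀ r : ℝ, 0 < r → 0 < ν (ball z r)}

open Set Complex
open scoped Real

lemma lintegral_Ioi_one_rpow_neg {s : ℝ} (hs : 1 < s) :
    ∫⁻ t in Ioi (1 : ℝ), ENNReal.ofReal (t ^ (-s)) = ENNReal.ofReal (s - 1)⁻¹ := by
  have hint : IntegrableOn (fun t : ℝ => t ^ (-s)) (Ioi 1) :=
    integrableOn_Ioi_rpow_of_lt (by linarith) one_pos
  rw [← ofReal_integral_eq_lintegral_ofReal hint, integral_Ioi_rpow_of_lt (by linarith) one_pos]
  · congr 1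
    rw [Real.one_rpow, neg_div, ← div_neg, neg_add_eq_sub, neg_sub, one_div]
  · filter_upwards [self_mem_ae_restrict measurableSet_Ioi] with t ht
    exact Real.rpow_nonneg (zero_le_one.trans ht.le) _

/-- Layer cake split at height `1`: below it the total mass, above it
`ν {w | t < ‖z - w‖⁻¹} ≤ ν (ball z t⁻¹) ≤ M t ^ (-s)`, integrable since `s > 1`. -/
lemma lintegral_inv_norm_sub_le {E : Type*} [NormedAddCommGroup E] [MeasurableSpace E]
    [OpensMeasurableSpace E] (ν : Measure E) {M s : ℝ} (hs : 1 < s)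
    (hgrowth : ∀ (z : E) (r : ℝ), 0 < r → ν (ball z r) ≤ ENNReal.ofReal (M * r ^ s)) (z : E) :
    ∫⁻ w, ENNReal.ofReal ‖z - w‖⁻¹ ∂ν ≤ ν univ + ENNReal.ofReal M * ENNReal.ofReal (s - 1)⁻¹ := by
  have hmeas : AEMeasurable (fun w : E => ‖z - w‖⁻¹) ν :=
    (continuous_const.sub continuous_id).norm.measurable.inv.aemeasurable
  rw [lintegral_eq_lintegral_meas_lt ν (.of_forall fun w => by positivity) hmeas,
    ← Ioc_union_Ioi_eq_Ioi zero_le_one, lintegral_union measurableSet_Ioi Ioc_disjoint_Ioi_same]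
  gcongr
  · calc ∫⁻ t in Ioc 0 1, ν {w | t < ‖z - w‖⁻¹} ≤ ∫⁻ _ in Ioc (0 : ℝ) 1, ν univ :=
          lintegral_mono fun t => measure_mono (subset_univ _)
      _ = ν univ := by simp
  · rw [← lintegral_Ioi_one_rpow_neg hs, ← lintegral_const_mul' _ _ ENNReal.ofReal_ne_top]
    refine setLIntegral_mono' measurableSet_Ioi fun t (ht : 1 < t) => ?_
    have ht0 : 0 < t := zero_lt_one.trans ht
    have hsub : {w | t < ‖z - w‖⁻¹} ⊆ ball z t⁻¹ := fun w (hw : t < ‖z - w‖⁻¹) => by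
      rw [mem_ball, dist_comm, dist_eq_norm]
      exact (lt_inv_comm₀ ht0 (inv_pos.mp (ht0.trans hw))).mp hw
    calc ν {w | t < ‖z - w‖⁻¹} ≤ ν (ball z t⁻¹) := measure_mono hsub
      _ ≤ ENNReal.ofReal (M * t⁻¹ ^ s) := hgrowth z _ (inv_pos.mpr ht0)
      _ = ENNReal.ofReal M * ENNReal.ofReal (t ^ (-s)) := by
          rw [Real.inv_rpow ht0.le, ← Real.rpow_neg ht0.le,
            ENNReal.ofReal_mul' (Real.rpow_nonneg ht0.le _)]

/-- Only countably many spheres about `c` carry mass, so some large sphere is null. -/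
lemma exists_measure_sphere_eq_zero_measure_ball_pos {X : Type*} [PseudoMetricSpace X]
    [MeasurableSpace X] [OpensMeasurableSpace X] {ν : Measure X} [SFinite ν] (hν : ν ≠ 0)
    (c : X) : ∃ R : ℝ, 0 < R ∧ ν (sphere c R) = 0 ∧ 0 < ν (ball c R) := by
  obtain ⟨n, hn⟩ : ∃ n : ℕ, 0 < ν (ball c n) := by
    by_contra! h
    refine hν (Measure.measure_univ_eq_zero.mp ?_)
    rw [← iUnion_ball_nat c]
    exact measure_iUnion_null fun n => nonpos_iff_eq_zero.mp (h n)
  have hcount : {R : ℝ | 0 < ν (sphere c R)}.Countable :=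
    Measure.countable_meas_level_set_pos (continuous_id.dist continuous_const).measurable
  obtain ⟨R, hR, hnR⟩ :=
    (hcount.dense_compl ℝ).exists_mem_open isOpen_Ioi (nonempty_Ioi (a := (n : ℝ)))
  exact ⟨R, (Nat.cast_nonneg n).trans_lt hnR, nonpos_iff_eq_zero.mp (not_lt.mp hR),
    hn.trans_le (measure_mono (ball_subset_ball hnR.le))⟩

def cauchyTransform (ν : Measure ℂ) (z : ℂ) : ℂ :=
  ∫ w, (↑π * (z - w))⁻¹ ∂ν

lemma half_le_norm_sub_of_mem_ball_of_notMem_ball {z x w : ℂ} {r : ℝ}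
    (hx : x ∈ ball z (r / 2)) (hw : w ∉ ball z r) : r / 2 ≤ ‖x - w‖ := by
  rw [mem_ball, dist_eq_norm] at hx hw
  have := norm_sub_le_norm_sub_add_norm_sub w x z
  rw [norm_sub_rev w x] at this
  linarith

lemma hasDerivAt_cauchyKernel {x w : ℂ} (h : x ≠ w) :
    HasDerivAt (fun y : ℂ => (↑π * (y - w))⁻¹) (-↑π / (↑π * (x - w)) ^ 2) x := by
  have hlin : HasDerivAt (fun y : ℂ => ↑π * (y - w)) ↑π x := by
    simpa using ((hasDerivAt_id x).sub_const w).const_mul (↑π : ℂ)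
  exact hlin.inv (mul_ne_zero (ofReal_ne_zero.mpr Real.pi_ne_zero) (sub_ne_zero.mpr h))

/-- Differentiation under the integral sign: on `ball z (r / 2)` the kernel and its derivative
are bounded uniformly in `w ∉ ball z r`. -/
lemma differentiableAt_cauchyTransform_of_measure_ball_eq_zero {ν : Measure ℂ}
    [IsFiniteMeasure ν] {z : ℂ} {r : ℝ} (hr : 0 < r) (hball : ν (ball z r) = 0) :
    DifferentiableAt ℂ (cauchyTransform ν) z := by
  have hae : ∀ᵐ w ∂ν, w ∉ ball z r := measure_eq_zero_iff_ae_notMem.mp hball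
  have hr2 : 0 < r / 2 := half_pos hr
  have hmeas : ∀ x : ℂ, AEStronglyMeasurable (fun w => (↑π * (x - w))⁻¹) ν := fun x =>
    ((measurable_const.sub measurable_id).const_mul _).inv.aestronglyMeasurable
  refine (hasDerivAt_integral_of_dominated_loc_of_deriv_le (μ := ν)
    (F' := fun x w => -↑π / (↑π * (x - w)) ^ 2) (ball_mem_nhds z hr2) (.of_forall hmeas) ?_
    ((measurable_const.div (((measurable_const.sub measurable_id).const_mul _).pow_const 2))
      |>.aestronglyMeasurable) (bound := fun _ => π / (π * (r / 2)) ^ 2) ?_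
    (integrable_const _) ?_).2.differentiableAt
  · refine (integrable_const (π * (r / 2))⁻¹).mono' (hmeas z) ?_
    filter_upwards [hae] with w hw
    rw [norm_inv, norm_mul, norm_real, Real.norm_of_nonneg Real.pi_pos.le]
    gcongr
    exact half_le_norm_sub_of_mem_ball_of_notMem_ball (mem_ball_self hr2) hw
  · filter_upwards [hae] with w hw x hx
    rw [norm_div, norm_neg, norm_pow, norm_mul, norm_real, Real.norm_of_nonneg Real.pi_pos.le]
    gcongr
    exact half_le_norm_sub_of_mem_ball_of_notMem_ball hx hw
  · filter_upwards [hae] with w hw x hx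
    refine hasDerivAt_cauchyKernel fun hxw => ?_
    have := half_le_norm_sub_of_mem_ball_of_notMem_ball hx hw
    rw [hxw, sub_self, norm_zero] at this
    linarith

lemma circleIntegral_integral_swap {α E : Type*} [MeasurableSpace α] {ν : Measure α} [SFinite ν]
    [NormedAddCommGroup E] [NormedSpace ℂ E] [CompleteSpace E] {f : ℂ → α → E} {c : ℂ} {R : ℝ}
    (hf : Integrable (fun p : ℝ × α => f (circleMap c R p.1) p.2)
      ((volume.restrict (Ioc 0 (2 * π))).prod ν)) :
    ∮ z in C(c, R), ∫ w, f z w ∂ν = ∫ w, ∮ z in C(c, R), f z w ∂ν := by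
  have hg : Integrable
      (Function.uncurry fun θ w => deriv (circleMap c R) θ • f (circleMap c R θ) w)
      ((volume.restrict (Ioc 0 (2 * π))).prod ν) := by
    refine hf.bdd_smul |R| ?_ (.of_forall fun p => ?_)
    · simp only [deriv_circleMap]
      exact (((continuous_circleMap 0 R).mul continuous_const).measurable.comp measurable_fst)
        |>.aestronglyMeasurable
    · rw [deriv_circleMap, norm_mul, norm_circleMap_zero, norm_I, mul_one]
  simp only [circleIntegral, intervalIntegral.integral_of_le Real.two_pi_pos.le]
  calc ∫ θ in Ioc 0 (2 * π), deriv (circleMap c R) θ • ∫ w, f (circleMap c R θ) w ∂ν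
      = ∫ θ in Ioc 0 (2 * π), ∫ w, deriv (circleMap c R) θ • f (circleMap c R θ) w ∂ν := by
        simp_rw [integral_smul]
    _ = _ := integral_integral_swap hg

lemma circleIntegral_cauchyKernel {c w : ℂ} {R : ℝ} (hR : 0 ≤ R) (hw : w ∉ sphere c R) :
    ∮ z in C(c, R), (↑π * (z - w))⁻¹ = (ball c R).indicator (fun _ => 2 * I) w := by
  simp_rw [mul_inv]
  rw [circleIntegral.integral_const_mul]
  by_cases hwR : w ∈ ball c R
  · rw [indicator_of_mem hwR, circleIntegral.integral_sub_inv_of_mem_ball hwR]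
    field_simp
  · have hout : R < dist w c := (not_lt.mp hwR).lt_of_ne' hw
    have hdiff : DifferentiableOn ℂ (fun z => (z - w)⁻¹) (closedBall c R) := fun z hz =>
      ((differentiableAt_id.sub_const w).inv (sub_ne_zero.mpr
        (ne_of_mem_of_not_mem hz fun hw' => (mem_closedBall.mp hw').not_gt hout)))
        |>.differentiableWithinAt
    rw [indicator_of_notMem hwR,
      (hdiff.mono closure_ball_subset_closedBall).diffContOnCl.circleIntegral_eq_zero hR, mul_zero]

lemma integrable_inv_sub_prod {α : Type*} [MeasurableSpace α] (μ : Measure α) [IsFiniteMeasure μ]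
    {ν : Measure ℂ} [SFinite ν] {γ : α → ℂ} (hγ : Measurable γ) {C : ℝ≥0∞} (hC : C ≠ ∞)
    (hbound : ∀ z, ∫⁻ w, ENNReal.ofReal ‖z - w‖⁻¹ ∂ν ≤ C) :
    Integrable (fun p : α × ℂ => (γ p.1 - p.2)⁻¹) (μ.prod ν) := by
  have hmeas : Measurable fun p : α × ℂ => (γ p.1 - p.2)⁻¹ :=
    ((hγ.comp measurable_fst).sub measurable_snd).inv
  refine ⟨hmeas.aestronglyMeasurable, (hasFiniteIntegral_iff_norm _).mpr ?_⟩
  calc ∫⁻ p, ENNReal.ofReal ‖(γ p.1 - p.2)⁻¹‖ ∂μ.prod ν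
      = ∫⁻ x, ∫⁻ w, ENNReal.ofReal ‖γ x - w‖⁻¹ ∂ν ∂μ := by
        rw [lintegral_prod _ hmeas.norm.ennreal_ofReal.aemeasurable]
        simp only [norm_inv]
    _ ≤ ∫⁻ _, C ∂μ := lintegral_mono fun x => hbound (γ x)
    _ < ∞ := by
        rw [lintegral_const]
        exact ENNReal.mul_lt_top hC.lt_top (measure_lt_top μ univ)

lemma circleIntegral_cauchyTransform {ν : Measure ℂ} [IsFiniteMeasure ν] {c : ℂ} {R : ℝ}
    (hR : 0 ≤ R) (hsphere : ν (sphere c R) = 0) {C : ℝ≥0∞} (hC : C ≠ ∞)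
    (hbound : ∀ z, ∫⁻ w, ENNReal.ofReal ‖z - w‖⁻¹ ∂ν ≤ C) :
    ∮ z in C(c, R), cauchyTransform ν z = ν.real (ball c R) • (2 * I) := by
  have hint := (integrable_inv_sub_prod (volume.restrict (Ioc 0 (2 * π)))
    (measurable_circleMap c R) hC hbound).const_mul (↑π : ℂ)⁻¹
  simp_rw [← mul_inv] at hint
  have hae : ∀ᵐ w ∂ν, w ∉ sphere c R := measure_eq_zero_iff_ae_notMem.mp hsphere
  simp only [cauchyTransform]
  rw [circleIntegral_integral_swap hint,
    integral_congr_ae (hae.mono fun w hw => circleIntegral_cauchyKernel hR hw),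
    integral_indicator_const _ measurableSet_ball]

theorem not_differentiable_cauchyTransform {ν : Measure ℂ} [IsFiniteMeasure ν] (hν : ν ≠ 0)
    {C : ℝ≥0∞} (hC : C ≠ ∞) (hbound : ∀ z, ∫⁻ w, ENNReal.ofReal ‖z - w‖⁻¹ ∂ν ≤ C) :
    ¬ Differentiable ℂ (cauchyTransform ν) := by
  intro hdiff
  obtain ⟨R, hR, hsphere, hball⟩ := exists_measure_sphere_eq_zero_measure_ball_pos hν 0
  have hzero := hdiff.diffContOnCl.circleIntegral_eq_zero hR.le (c := 0)
  rw [circleIntegral_cauchyTransform hR.le hsphere hC hbound] at hzero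
  exact smul_ne_zero ((measureReal_ne_zero_iff).mpr hball.ne')
    (mul_ne_zero two_ne_zero I_ne_zero) hzero

theorem cauchyTransform_holomorphic_not_entire_general (α M : ℝ) (hα : α ∈ Set.Ioo (0 : ℝ) 1)
    (ν : Measure ℂ) [IsFiniteMeasure ν] (hν : ν ≠ 0)
    (hgrowth : ∀ (z : ℂ) (r : ℝ), 0 < r → ν (ball z r) ≤ ENNReal.ofReal (M * r ^ (1 + α))) :
    (∀ z ∉ measureSupport ν,
      DifferentiableAt ℂ (fun x : ℂ => ∫ u, (↑Real.pi * (x - u))⁻¹ ∂ν) z) ∧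
    ¬ Differentiable ℂ (fun x : ℂ => ∫ u, (↑Real.pi * (x - u))⁻¹ ∂ν) := by
  refine ⟨fun z hz => ?_, not_differentiable_cauchyTransform hν (by finiteness)
    (lintegral_inv_norm_sub_le ν (lt_add_of_pos_right 1 hα.1) hgrowth)⟩
  simp only [measureSupport, mem_ofPred, not_forall, not_lt, nonpos_iff_eq_zero] at hz
  obtain ⟨r, hr, hball⟩ := hz
  exact differentiableAt_cauchyTransform_of_measure_ball_eq_zero hr hball

/-- If `ν ≠ 0` is a finite positive Borel measure on `ℂ` with growth
`ν(D(z,r)) ≤ M r^{1+α}`, then its Cauchy transform `h(z) = ∫ 1/(π(z−w)) dν(w)` is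
holomorphic at every point outside the support of `ν`, but is not holomorphic on all
of `ℂ`: it has no entire extension. -/
theorem cauchyTransform_holomorphic_not_entire (α M : ℝ) (hα : α ∈ Set.Ioo (0 : ℝ) 1)
    (hM : 0 < M) (ν : Measure ℂ) [IsFiniteMeasure ν] (hν : ν ≠ 0)
    (hgrowth : ∀ (z : ℂ) (r : ℝ), 0 < r → ν (ball z r) ≤ ENNReal.ofReal (M * r ^ (1 + α))) :
    (∀ z ∉ measureSupport ν,
      DifferentiableAt ℂ (fun x : ℂ => ∫ u, (↑Real.pi * (x - u))⁻¹ ∂ν) z) ∧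
    ¬ Differentiable ℂ (fun x : ℂ => ∫ u, (↑Real.pi * (x - u))⁻¹ ∂ν) :=
  cauchyTransform_holomorphic_not_entire_general α M hα ν hν hgrowth
end
end

section
/- Let 0 < γ ≤ 1 and C ≥ 1. Let (D_j)_{j∈ℕ}, with D_j = D(z_j, r_j), be a family of open disks contained in the unit disk 𝔻 ⊂ ℂ whose closed disks are pairwise disjoint. Let ψ : ℂ → ℂ be a continuous map such that: (i) ψ(z) = z for every z ∉ ⋃_j D_j; (ii) ψ(D_j) ⊆ closure(D_j) for every j; (iii) for every j and all z, w ∈ D_j one has |ψ(z) − ψ(w)| ≤ C|z − w|^γ. Then |ψ(z) − ψ(w)| ≤ (2C + 1)|z − w|^γ for all z, w ∈ ℂ with |z − w| < 1. -/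
open Metric

/-!
If `x` and `y` lie in a common disk, hypothesis (iii) applies directly. Otherwise, starting
from `x`, the segment `[x, y]` either starts outside every disk or leaves the disk containing `x`
through its boundary circle at some point `p`. Since the closed disks are pairwise disjoint,
`p` lies in no open disk, so `ψ p = p`, and the Hölder bound, which extends by continuity to the
closed disk, gives `‖ψ x - p‖ ≤ C ‖x - y‖ ^ γ`. A point `q` on the segment is found in the same
way from `y`, and `‖p - q‖ ≤ ‖x - y‖ ≤ ‖x - y‖ ^ γ` because `‖x - y‖ ≤ 1` and `γ ≤ 1`.
-/

def HolderBoundOn {E F : Type*} [SeminormedAddCommGroup E] [SeminormedAddCommGroup F]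
    (C γ : ℝ) (f : E → F) (s : Set E) : Prop :=
  ∀ x ∈ s, ∀ y ∈ s, ‖f x - f y‖ ≤ C * ‖x - y‖ ^ γ

theorem HolderBoundOn.closure {E F : Type*} [SeminormedAddCommGroup E]
    [SeminormedAddCommGroup F] {C γ : ℝ} {f : E → F} {s : Set E}
    (h : HolderBoundOn C γ f s) (hf : Continuous f) (hγ : 0 ≤ γ) :
    HolderBoundOn C γ f (closure s) := by
  have hclosed : IsClosed {p : E × E | ‖f p.1 - f p.2‖ ≤ C * ‖p.1 - p.2‖ ^ γ} :=
    isClosed_le (by fun_prop)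
      (continuous_const.mul ((continuous_fst.sub continuous_snd).norm.rpow_const
        fun _ => Or.inr hγ))
  intro x hx y hy
  have hxy : (x, y) ∈ _root_.closure (s ×ˢ s) := by
    rw [closure_prod_eq]; exact ⟨hx, hy⟩
  exact closure_minimal (fun p hp => h p.1 hp.1 p.2 hp.2) hclosed hxy

theorem notMem_iUnion_ball_of_mem_sphere {X ι : Type*} [PseudoMetricSpace X] {c : ι → X}
    {r : ι → ℝ}
    (hdisj : Pairwise fun i j => Disjoint (closedBall (c i) (r i)) (closedBall (c j) (r j)))
    {i : ι} {p : X} (hp : p ∈ sphere (c i) (r i)) : p ∉ ⋃ j, ball (c j) (r j) := by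
  simp only [Set.mem_iUnion, not_exists]
  intro j hj
  rcases eq_or_ne j i with rfl | hne
  · exact (mem_ball.1 hj).ne (mem_sphere.1 hp)
  · exact Set.disjoint_left.1 (hdisj hne) (ball_subset_closedBall hj) (sphere_subset_closedBall hp)

section Segment

variable {E : Type*} [NormedAddCommGroup E] [NormedSpace ℝ E]

theorem exists_mem_segment_mem_sphere {c u v : E} {r : ℝ} (hu : u ∈ ball c r)
    (hv : v ∉ ball c r) : ∃ p ∈ segment ℝ u v, p ∈ sphere c r := by
  obtain ⟨p, hp, hpc, hpb⟩ := isPreconnected_closed_iff.1 (convex_segment u v).isPreconnected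
    (closedBall c r) (ball c r)ᶜ isClosed_closedBall isOpen_ball.isClosed_compl
    (fun q _ => (em (q ∈ ball c r)).imp_left (ball_subset_closedBall ·))
    ⟨u, left_mem_segment ℝ u v, ball_subset_closedBall hu⟩ ⟨v, right_mem_segment ℝ u v, hv⟩
  exact ⟨p, hp, by rw [← closedBall_sdiff_ball]; exact ⟨hpc, hpb⟩⟩

theorem norm_sub_le_of_mem_segment_of_mem_segment {x y p q : E} (hp : p ∈ segment ℝ x y)
    (hq : q ∈ segment ℝ x y) : ‖p - q‖ ≤ ‖x - y‖ := by
  have hx : x ∈ closedBall p (dist x y) :=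
    mem_closedBall_comm.1 (segment_subset_closedBall_left x y hp)
  have hy : y ∈ closedBall p (dist x y) :=
    mem_closedBall_comm.1 (segment_subset_closedBall_right x y hp)
  have hqp := (convex_closedBall p _).segment_subset hx hy hq
  rwa [mem_closedBall, dist_eq_norm, dist_eq_norm, norm_sub_rev] at hqp

end Segment

section DisjointBalls

variable {E ι : Type*} [NormedAddCommGroup E] [NormedSpace ℝ E] {c : ι → E} {r : ι → ℝ}

theorem exists_mem_segment_norm_sub_le {C γ : ℝ} {ψ : E → E} (hC : 0 ≤ C) (hγ : 0 ≤ γ)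
    (hdisj : Pairwise fun i j => Disjoint (closedBall (c i) (r i)) (closedBall (c j) (r j)))
    (hcont : Continuous ψ) (hid : ∀ x, x ∉ ⋃ j, ball (c j) (r j) → ψ x = x)
    (hhold : ∀ j, HolderBoundOn C γ ψ (ball (c j) (r j))) {u v : E}
    (huv : ∀ j, u ∈ ball (c j) (r j) → v ∉ ball (c j) (r j)) :
    ∃ p ∈ segment ℝ u v, ‖ψ u - p‖ ≤ C * ‖u - v‖ ^ γ := by
  by_cases hu : u ∈ ⋃ j, ball (c j) (r j)
  · obtain ⟨i, hui⟩ := Set.mem_iUnion.1 hu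
    obtain ⟨p, hpseg, hpsph⟩ := exists_mem_segment_mem_sphere hui (huv i hui)
    have hfix : ψ p = p := hid p (notMem_iUnion_ball_of_mem_sphere hdisj hpsph)
    have hpcl : p ∈ closure (ball (c i) (r i)) := by
      rw [closure_ball _ (pos_of_mem_ball hui).ne']
      exact sphere_subset_closedBall hpsph
    refine ⟨p, hpseg, ?_⟩
    calc ‖ψ u - p‖ = ‖ψ u - ψ p‖ := by rw [hfix]
      _ ≤ C * ‖u - p‖ ^ γ := (hhold i).closure hcont hγ u (subset_closure hui) p hpcl
      _ ≤ C * ‖u - v‖ ^ γ := by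
        rw [norm_sub_rev u p, norm_sub_rev u v]
        gcongr
        exact norm_sub_le_of_mem_segment hpseg
  · refine ⟨u, left_mem_segment ℝ u v, ?_⟩
    rw [hid u hu, sub_self, norm_zero]
    positivity

theorem norm_sub_le_of_holderBoundOn_disjoint_balls {C γ : ℝ} {ψ : E → E} (hC : 0 ≤ C)
    (hγ0 : 0 ≤ γ) (hγ1 : γ ≤ 1)
    (hdisj : Pairwise fun i j => Disjoint (closedBall (c i) (r i)) (closedBall (c j) (r j)))
    (hcont : Continuous ψ) (hid : ∀ x, x ∉ ⋃ j, ball (c j) (r j) → ψ x = x)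
    (hhold : ∀ j, HolderBoundOn C γ ψ (ball (c j) (r j))) {x y : E} (hxy : ‖x - y‖ ≤ 1) :
    ‖ψ x - ψ y‖ ≤ (2 * C + 1) * ‖x - y‖ ^ γ := by
  by_cases hsame : ∃ j, x ∈ ball (c j) (r j) ∧ y ∈ ball (c j) (r j)
  · obtain ⟨j, hx, hy⟩ := hsame
    calc ‖ψ x - ψ y‖ ≤ C * ‖x - y‖ ^ γ := hhold j x hx y hy
      _ ≤ (2 * C + 1) * ‖x - y‖ ^ γ := by gcongr; linarith
  push Not at hsame
  obtain ⟨p, hp, hxp⟩ := exists_mem_segment_norm_sub_le hC hγ0 hdisj hcont hid hhold hsame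
  obtain ⟨q, hq, hyq⟩ := exists_mem_segment_norm_sub_le hC hγ0 hdisj hcont hid hhold
    fun j hy hx => hsame j hx hy
  rw [segment_symm] at hq
  rw [norm_sub_rev y] at hyq
  have hpq : ‖p - q‖ ≤ ‖x - y‖ ^ γ :=
    (norm_sub_le_of_mem_segment_of_mem_segment hp hq).trans
      (Real.self_le_rpow_of_le_one (norm_nonneg _) hxy hγ1)
  calc ‖ψ x - ψ y‖ ≤ ‖ψ x - p‖ + ‖p - q‖ + ‖q - ψ y‖ := by
        linarith [norm_sub_le_norm_sub_add_norm_sub (ψ x) p q,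
          norm_sub_le_norm_sub_add_norm_sub (ψ x) q (ψ y)]
    _ ≤ C * ‖x - y‖ ^ γ + ‖x - y‖ ^ γ + C * ‖x - y‖ ^ γ := by
        rw [norm_sub_rev q]
        gcongr
    _ = (2 * C + 1) * ‖x - y‖ ^ γ := by ring

end DisjointBalls

theorem glue_holder_on_disks_general (γ C : ℝ) (hγ0 : 0 < γ) (hγ1 : γ ≤ 1) (hC : 1 ≤ C)
    (z : ℕ → ℂ) (r : ℕ → ℝ)
    (hdisj : Pairwise fun i j => Disjoint (closedBall (z i) (r i)) (closedBall (z j) (r j)))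
    (ψ : ℂ → ℂ) (hcont : Continuous ψ)
    (hid : ∀ x : ℂ, x ∉ ⋃ j, ball (z j) (r j) → ψ x = x)
    (hhold : ∀ j, ∀ x ∈ ball (z j) (r j), ∀ y ∈ ball (z j) (r j),
      ‖ψ x - ψ y‖ ≤ C * ‖x - y‖ ^ γ) :
    ∀ x y : ℂ, ‖x - y‖ < 1 → ‖ψ x - ψ y‖ ≤ (2 * C + 1) * ‖x - y‖ ^ γ :=
  fun _ _ hxy => norm_sub_le_of_holderBoundOn_disjoint_balls (zero_le_one.trans hC) hγ0.le hγ1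
    hdisj hcont hid hhold hxy.le

/-- Gluing lemma: if `ψ` is the identity outside a family of disjoint disks contained in
the unit disk, maps each disk into its closure, and is `γ`-Hölder with constant `C ≥ 1`
on each disk, then `ψ` is `γ`-Hölder on `ℂ` with constant `2C + 1` (for `|z−w| < 1`). -/
theorem glue_holder_on_disks (γ C : ℝ) (hγ0 : 0 < γ) (hγ1 : γ ≤ 1) (hC : 1 ≤ C)
    (z : ℕ → ℂ) (r : ℕ → ℝ) (hr : ∀ j, 0 < r j)
    (hsub : ∀ j, ball (z j) (r j) ⊆ ball (0 : ℂ) 1)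
    (hdisj : Pairwise fun i j => Disjoint (closedBall (z i) (r i)) (closedBall (z j) (r j)))
    (ψ : ℂ → ℂ) (hcont : Continuous ψ)
    (hid : ∀ x : ℂ, x ∉ ⋃ j, ball (z j) (r j) → ψ x = x)
    (hmap : ∀ j, ψ '' ball (z j) (r j) ⊆ closedBall (z j) (r j))
    (hhold : ∀ j, ∀ x ∈ ball (z j) (r j), ∀ y ∈ ball (z j) (r j),
      ‖ψ x - ψ y‖ ≤ C * ‖x - y‖ ^ γ) :
    ∀ x y : ℂ, ‖x - y‖ < 1 → ‖ψ x - ψ y‖ ≤ (2 * C + 1) * ‖x - y‖ ^ γ :=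
  glue_holder_on_disks_general γ C hγ0 hγ1 hC z r hdisj ψ hcont hid hhold
end

section
/- There exists m₀ ∈ ℕ such that for every integer m ≥ m₀ there exist points z₁, …, z_m in the open unit disk 𝔻 ⊂ ℂ and a radius r > 0 such that the closed disks closure(D(z_i, r)), i = 1, …, m, are pairwise disjoint and all contained in 𝔻, and m·r² ≥ 1/2. -/
/-!
Place the disks at the points of the square grid `d ℤ²` lying in the disk of radius `1 - r`,
with spacing `d` slightly larger than `2r`. The grid cells of these points cover the disk of
radius `1 - r - 2d`, so by comparing areas there are at least `π (1 - r - 2d)² / d²` of them.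
With `m r² = 1/2` and `d = 9r/4` this exceeds `m` once `r` is small, because `m d² = 81/32 < π`.
-/

open Metric MeasureTheory Real
open scoped ENNReal

def gridPoint (d : ℝ) (n : ℤ × ℤ) : ℂ := ⟨d * n.1, d * n.2⟩

theorem le_dist_gridPoint (d : ℝ) {n n' : ℤ × ℤ} (h : n ≠ n') :
    d ≤ dist (gridPoint d n) (gridPoint d n') := by
  have hsq : (1 : ℤ) ≤ (n.1 - n'.1) ^ 2 + (n.2 - n'.2) ^ 2 := by
    by_contra! hlt
    have h₁ : (n.1 - n'.1) ^ 2 = 0 := by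
      nlinarith [sq_nonneg (n.1 - n'.1), sq_nonneg (n.2 - n'.2)]
    have h₂ : (n.2 - n'.2) ^ 2 = 0 := by
      nlinarith [sq_nonneg (n.1 - n'.1), sq_nonneg (n.2 - n'.2)]
    rw [pow_eq_zero_iff two_ne_zero, sub_eq_zero] at h₁ h₂
    exact h (Prod.ext h₁ h₂)
  rw [Complex.dist_eq_re_im]
  apply Real.le_sqrt_of_sq_le
  calc d ^ 2 ≤ d ^ 2 * (((n.1 - n'.1) ^ 2 + (n.2 - n'.2) ^ 2 : ℤ) : ℝ) :=
        le_mul_of_one_le_right (sq_nonneg d) (mod_cast hsq)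
    _ = _ := by push_cast [gridPoint]; ring

def gridCell (d : ℝ) (n : ℤ × ℤ) : Set ℂ :=
  Set.Ico (d * n.1) (d * n.1 + d) ×ℂ Set.Ico (d * n.2) (d * n.2 + d)

theorem volume_gridCell {d : ℝ} (hd : 0 ≤ d) (n : ℤ × ℤ) :
    volume (gridCell d n) = ENNReal.ofReal (d ^ 2) := by
  change volume (Complex.measurableEquivRealProd ⁻¹'
    (Set.Ico (d * n.1) (d * n.1 + d) ×ˢ Set.Ico (d * n.2) (d * n.2 + d))) = _
  rw [Complex.volume_preserving_equiv_real_prod.measure_preimage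
    (measurableSet_Ico.prod measurableSet_Ico).nullMeasurableSet, Measure.volume_eq_prod,
    Measure.prod_prod, Real.volume_Ico, Real.volume_Ico, sq, ENNReal.ofReal_mul hd]
  simp only [add_sub_cancel_left]

theorem mem_Ico_mul_floor_div {d : ℝ} (hd : 0 < d) (x : ℝ) :
    x ∈ Set.Ico (d * ⌊x / d⌋) (d * ⌊x / d⌋ + d) := by
  constructor
  · rw [← le_div_iff₀' hd]
    exact Int.floor_le _
  · rw [← mul_add_one, ← div_lt_iff₀' hd]
    exact Int.lt_floor_add_one _

theorem mem_gridCell_floor {d : ℝ} (hd : 0 < d) (q : ℂ) :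
    q ∈ gridCell d (⌊q.re / d⌋, ⌊q.im / d⌋) :=
  ⟨mem_Ico_mul_floor_div hd q.re, mem_Ico_mul_floor_div hd q.im⟩

theorem dist_gridPoint_lt_of_mem_gridCell {d : ℝ} {n : ℤ × ℤ} {q : ℂ} (hq : q ∈ gridCell d n) :
    dist q (gridPoint d n) < 2 * d := by
  obtain ⟨⟨hre₁, hre₂⟩, him₁, him₂⟩ := hq
  rw [Complex.dist_eq]
  calc _ ≤ |q.re - d * n.1| + |q.im - d * n.2| := Complex.norm_le_abs_re_add_abs_im _
    _ < 2 * d := by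
      rw [abs_of_nonneg (by linarith), abs_of_nonneg (by linarith)]
      linarith

theorem ball_subset_biUnion_gridCell (c : ℂ) {d : ℝ} (hd : 0 < d) (R : ℝ) :
    ball c R ⊆ ⋃ n ∈ {n | gridPoint d n ∈ ball c (R + 2 * d)}, gridCell d n := by
  intro q hq
  have hcell := mem_gridCell_floor hd q
  refine Set.mem_biUnion ?_ hcell
  calc dist (gridPoint d _) c ≤ dist (gridPoint d _) q + dist q c := dist_triangle _ _ _
    _ < 2 * d + R := by
      rw [dist_comm]
      exact add_lt_add (dist_gridPoint_lt_of_mem_gridCell hcell) hq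
    _ = R + 2 * d := add_comm _ _

theorem volume_ball_le_encard_mul (c : ℂ) {d : ℝ} (hd : 0 < d) (R : ℝ) :
    volume (ball c R) ≤
      {n | gridPoint d n ∈ ball c (R + 2 * d)}.encard * ENNReal.ofReal (d ^ 2) :=
  calc volume (ball c R)
      ≤ volume (⋃ n ∈ {n | gridPoint d n ∈ ball c (R + 2 * d)}, gridCell d n) :=
        measure_mono (ball_subset_biUnion_gridCell c hd R)
    _ ≤ ∑' n : {n | gridPoint d n ∈ ball c (R + 2 * d)}, volume (gridCell d n) :=
        measure_biUnion_le _ (Set.to_countable _) _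
    _ = _ := by simp only [volume_gridCell hd.le, ENNReal.tsum_const, Set.encard]

theorem natCast_le_encard_gridPoint_mem_ball (c : ℂ) {d R : ℝ} (hd : 0 < d) (hR : 0 ≤ R)
    {m : ℕ} (hm : m * d ^ 2 ≤ π * R ^ 2) :
    (m : ℕ∞) ≤ {n | gridPoint d n ∈ ball c (R + 2 * d)}.encard := by
  have hvol : (m : ℝ≥0∞) * ENNReal.ofReal (d ^ 2) ≤
      {n | gridPoint d n ∈ ball c (R + 2 * d)}.encard * ENNReal.ofReal (d ^ 2) :=
    calc (m : ℝ≥0∞) * ENNReal.ofReal (d ^ 2) = ENNReal.ofReal (m * d ^ 2) := by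
          rw [ENNReal.ofReal_mul (Nat.cast_nonneg m), ENNReal.ofReal_natCast]
      _ ≤ ENNReal.ofReal (π * R ^ 2) := ENNReal.ofReal_le_ofReal hm
      _ = volume (ball c R) := by
          rw [Complex.volume_ball, ENNReal.ofReal_mul pi_nonneg, ENNReal.ofReal_pow hR, mul_comm,
            ← NNReal.coe_real_pi, ENNReal.ofReal_coe_nnreal]
      _ ≤ _ := volume_ball_le_encard_mul c hd R
  rw [ENNReal.mul_le_mul_iff_left (by positivity) ENNReal.ofReal_ne_top] at hvol
  exact_mod_cast hvol

theorem exists_pairwise_disjoint_closedBall_subset_ball (c : ℂ) {r d R : ℝ} (hd : 0 < d)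
    (hrd : 2 * r < d) (hR : 0 ≤ R - r - 2 * d) {m : ℕ}
    (hm : m * d ^ 2 ≤ π * (R - r - 2 * d) ^ 2) :
    ∃ z : Fin m → ℂ, (∀ i, closedBall (z i) r ⊆ ball c R) ∧
      Pairwise fun i j => Disjoint (closedBall (z i) r) (closedBall (z j) r) := by
  have hcard := natCast_le_encard_gridPoint_mem_ball c hd hR hm
  rw [show R - r - 2 * d + 2 * d = R - r by ring] at hcard
  obtain ⟨f, hf_mem, hf_inj⟩ :=
    (Set.finite_univ (α := Fin m)).exists_injOn_of_encard_le (by simpa using hcard)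
  refine ⟨fun i => gridPoint d (f i), fun i => closedBall_subset_ball' ?_, fun i j hij => ?_⟩
  · have : dist (gridPoint d (f i)) c < R - r := hf_mem (Set.mem_univ i)
    linarith
  · apply closedBall_disjoint_closedBall
    have := le_dist_gridPoint d (hf_inj.ne (Set.mem_univ i) (Set.mem_univ j) hij)
    linarith

/-- For all sufficiently large `m` one can pack `m` pairwise disjoint closed disks of equal
radius `r` inside the open unit disk with total (normalized) area `m r² ≥ 1/2`. -/
theorem disk_packing_half_area :
    ∃ m₀ : ℕ, ∀ m : ℕ, m₀ ≤ m →
      ∃ (z : Fin m → ℂ) (r : ℝ), 0 < r ∧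
        (∀ i, closedBall (z i) r ⊆ ball (0 : ℂ) 1) ∧
        (Pairwise fun i j => Disjoint (closedBall (z i) r) (closedBall (z j) r)) ∧
        (1 / 2 : ℝ) ≤ (m : ℝ) * r ^ 2 := by
  refine ⟨10000, fun m hm => ?_⟩
  have hm' : (10000 : ℝ) ≤ m := mod_cast hm
  set r := √(1 / (2 * m))
  have hr : 0 < r := Real.sqrt_pos.mpr (by positivity)
  have hmr : m * r ^ 2 = 1 / 2 := by
    rw [Real.sq_sqrt (by positivity)]
    field_simp
  have hr_small : r ≤ 1 / 100 := by nlinarith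
  have harea : m * (9 / 4 * r) ^ 2 ≤ π * (1 - r - 2 * (9 / 4 * r)) ^ 2 :=
    calc m * (9 / 4 * r) ^ 2 = 81 / 32 := by linear_combination (81 / 16) * hmr
      _ ≤ 3 * (189 / 200) ^ 2 := by norm_num
      _ ≤ π * (1 - r - 2 * (9 / 4 * r)) ^ 2 := by
        gcongr
        · exact pi_gt_three.le
        · linarith
  obtain ⟨z, hsub, hdisj⟩ := exists_pairwise_disjoint_closedBall_subset_ball 0
    (by positivity) (by linarith) (by linarith) harea
  exact ⟨z, r, hr, hsub, hdisj, hmr.ge⟩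
end
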